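/- arXiv:1507.07664 — 2 statements merged into one kernel-verified Lean document; each statement's English description precedes it below -/
import Mathlib

section
/- Let ω be an exchangeable probability measure on the space of infinite rewiring maps, and for each n define the transition kernel P_ω^(n)(G,G') := ω({W : W|_{[n]}(G) = G'}) on graphs with vertex set [n]. Then these kernels are consistent: for all m ≤ n, all graphs G, G' on [m], and every graph G* on [n] restricting to G, P_ω^(m)(G,G') = P_ω^(n)(G*, {G'' on [n] : G''|_{[m]} = G'}). -/
open MeasureTheory

/-- The action of (the restriction to `[n]` of) an infinite rewiring map on a graph on `[n]`. -/
def rewireAt {n : ℕ} (W : ℕ → ℕ → Bool × Bool) (G : Fin n → Fin n → Bool) :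
    Fin n → Fin n → Bool :=
  fun i j => if G i j then (W i j).2 else (W i j).1

/-- Transition kernel `P_ω^(n)(G,G') = ω {W : W|[n](G) = G'}`. -/
noncomputable def Pker (ω : Measure (ℕ → ℕ → Bool × Bool)) {n : ℕ}
    (G G' : Fin n → Fin n → Bool) : ENNReal :=
  ω {W | rewireAt W G = G'}

theorem rewireAt_castLE {m n : ℕ} (h : m ≤ n) (W : ℕ → ℕ → Bool × Bool)
    (G : Fin n → Fin n → Bool) (i j : Fin m) :
    rewireAt W G (Fin.castLE h i) (Fin.castLE h j) =
      rewireAt W (fun i j => G (Fin.castLE h i) (Fin.castLE h j)) i j :=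
  rfl

theorem stmt5_general (ω : Measure (ℕ → ℕ → Bool × Bool))
    {m n : ℕ} (hmn : m ≤ n) (G G' : Fin m → Fin m → Bool)
    (Gs : Fin n → Fin n → Bool)
    (hres : ∀ i j : Fin m, Gs (Fin.castLE hmn i) (Fin.castLE hmn j) = G i j) :
    Pker ω G G' =
      ω {W | ∀ i j : Fin m,
        rewireAt W Gs (Fin.castLE hmn i) (Fin.castLE hmn j) = G' i j} := by
  have hG : (fun i j => Gs (Fin.castLE hmn i) (Fin.castLE hmn j)) = G := funext₂ hres
  simp only [Pker, rewireAt_castLE, hG, funext_iff]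

theorem stmt5 (ω : Measure (ℕ → ℕ → Bool × Bool)) [IsProbabilityMeasure ω]
    (hexch : ∀ σ : Equiv.Perm ℕ, {i | σ i ≠ i}.Finite →
      ω.map (fun W => fun i j => W (σ i) (σ j)) = ω)
    {m n : ℕ} (hmn : m ≤ n) (G G' : Fin m → Fin m → Bool)
    (Gs : Fin n → Fin n → Bool)
    (hres : ∀ i j : Fin m, Gs (Fin.castLE hmn i) (Fin.castLE hmn j) = G i j) :
    Pker ω G G' =
      ω {W | ∀ i j : Fin m,
        rewireAt W Gs (Fin.castLE hmn i) (Fin.castLE hmn j) = G' i j} :=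
  stmt5_general ω hmn G G' Gs hres
end

section
/- For α, α', β > 0 and the transition kernel P(G,G') = α^{↑n_{00}} β^{↑n_{01}} α'^{↑n_{11}} β^{↑n_{10}} / ((α+β)^{↑n_0} (α'+β)^{↑n_1}) on graphs with vertex set [n], where n_{rs} = #{i<j : G_{ij}=r, G'_{ij}=s}, n_0 = n_{00}+n_{01}, n_1 = n_{10}+n_{11}, detailed balance holds with respect to the mixed Erdős–Rényi measure ε^{(n)}_{α+β, α'+β}(G) = (α+β)^{↑n_0(G)} (α'+β)^{↑n_1(G)} / (α+2β+α')^{↑N}: that is, ε^{(n)}_{α+β,α'+β}(G) P(G,G') = ε^{(n)}_{α+β,α'+β}(G') P(G',G) for all graphs G, G' on [n]. -/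
abbrev Edge (n : ℕ) := {p : Fin n × Fin n // p.1 < p.2}

noncomputable def risePow (x : ℝ) (k : ℕ) : ℝ := ∏ i ∈ Finset.range k, (x + i)

/-- `n_{rs}(G,G') = #{e : G e = r, G' e = s}`. -/
def cnt {n : ℕ} (G G' : Edge n → Bool) (r s : Bool) : ℕ :=
  (Finset.univ.filter fun e : Edge n => G e = r ∧ G' e = s).card

/-- `n_r(G) = #{e : G e = r}`. -/
def cnt1 {n : ℕ} (G : Edge n → Bool) (r : Bool) : ℕ :=
  (Finset.univ.filter fun e : Edge n => G e = r).card

/-- Mixed Erdős–Rényi measure `ε^{(n)}_{α+β, α'+β}`. -/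
noncomputable def mixedER {n : ℕ} (α α' β : ℝ) (G : Edge n → Bool) : ℝ :=
  risePow (α + β) (cnt1 G false) * risePow (α' + β) (cnt1 G true) /
    risePow (α + 2 * β + α') (n * (n - 1) / 2)

/-- The reversible transition kernel `P^{(n)}_{(β,α),(α',β)}`. -/
noncomputable def revTrans {n : ℕ} (α α' β : ℝ) (G G' : Edge n → Bool) : ℝ :=
  risePow α (cnt G G' false false) * risePow β (cnt G G' false true) *
      risePow α' (cnt G G' true true) * risePow β (cnt G G' true false) /
    (risePow (α + β) (cnt1 G false) * risePow (α' + β) (cnt1 G true))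

/-! The rising factorials normalising `P(G, ·)` cancel against `ε(G)`. What remains is symmetric
under `G ↔ G'`: the swap exchanges `n_{01}` and `n_{10}`, which both carry the parameter `β`. -/

lemma risePow_pos {x : ℝ} (hx : 0 < x) (k : ℕ) : 0 < risePow x k :=
  Finset.prod_pos fun i _ => by positivity

lemma cnt_comm {n : ℕ} (G G' : Edge n → Bool) (r s : Bool) :
    cnt G G' r s = cnt G' G s r := by
  simp only [cnt, and_comm]

lemma mixedER_mul_revTrans {n : ℕ} {α α' β : ℝ} (hαβ : 0 < α + β) (hα'β : 0 < α' + β)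
    (G G' : Edge n → Bool) :
    mixedER α α' β G * revTrans α α' β G G' =
      risePow α (cnt G G' false false) * risePow β (cnt G G' false true) *
        risePow α' (cnt G G' true true) * risePow β (cnt G G' true false) /
        risePow (α + 2 * β + α') (n * (n - 1) / 2) := by
  have h₀ := (risePow_pos hαβ (cnt1 G false)).ne'
  have h₁ := (risePow_pos hα'β (cnt1 G true)).ne'
  unfold mixedER revTrans
  field_simp

theorem stmt9 {n : ℕ} (α α' β : ℝ) (hα : 0 < α) (hα' : 0 < α') (hβ : 0 < β)
    (G G' : Edge n → Bool) :
    mixedER α α' β G * revTrans α α' β G G' =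
      mixedER α α' β G' * revTrans α α' β G' G := by
  have hαβ : 0 < α + β := by linarith
  have hα'β : 0 < α' + β := by linarith
  rw [mixedER_mul_revTrans hαβ hα'β, mixedER_mul_revTrans hαβ hα'β,
    cnt_comm G' G false false, cnt_comm G' G true true,
    cnt_comm G' G false true, cnt_comm G' G true false]
  ring
end
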